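/- Let f: X → D_n(X) be an n-valued map on a connected finite polyhedron X, let X̂ = Γ_f with coordinate projections q(x,y) = x and F(x,y) = y, and let X̂_1,...,X̂_k denote the path components of X̂ with F_i = F restricted to X̂_i. Then the irreducible partition f = {f_1,...,f_k} of f has exactly k members if and only if X̂ has exactly k path components, and in this case (after reordering) f_i(x) = F_i(q^{-1}(x) ∩ X̂_i) for every x ∈ X and every i. -/

import Mathlib

open Function Set

/-- The ordered configuration space of `n` points in `Y`. -/
def OrdConf (n : ℕ) (Y : Type*) [TopologicalSpace Y] : Type _ :=
  {y : Fin n → Y // Function.Injective y}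

instance (n : ℕ) (Y : Type*) [TopologicalSpace Y] : TopologicalSpace (OrdConf n Y) :=
  instTopologicalSpaceSubtype

/-- Two ordered configurations are equivalent when they differ by a permutation. -/
def confSetoid (n : ℕ) (Y : Type*) [TopologicalSpace Y] : Setoid (OrdConf n Y) where
  r a b := ∃ σ : Equiv.Perm (Fin n), a.1 ∘ σ = b.1
  iseqv := by
    constructor
    · intro a; exact ⟨Equiv.refl _, rfl⟩
    · rintro a b ⟨σ, h⟩
      refine ⟨σ.symm, funext fun i => ?_⟩
      have := congrFun h (σ.symm i)
      simpa using this.symm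
    · rintro a b c ⟨σ, h1⟩ ⟨τ, h2⟩
      refine ⟨τ.trans σ, funext fun i => ?_⟩
      have h1' := congrFun h1 (τ i)
      have h2' := congrFun h2 i
      simp only [Function.comp_apply] at h1' h2' ⊢
      simp [Equiv.trans_apply, h1', h2']

/-- The unordered configuration space `D_n(Y)` of `n` points in `Y`,
with the quotient topology. -/
def UnordConf (n : ℕ) (Y : Type*) [TopologicalSpace Y] : Type _ :=
  Quotient (confSetoid n Y)

instance (n : ℕ) (Y : Type*) [TopologicalSpace Y] : TopologicalSpace (UnordConf n Y) :=
  instTopologicalSpaceQuotient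

/-- The underlying `n`-element subset of `Y` determined by an unordered configuration. -/
def UnordConf.values {n : ℕ} {Y : Type*} [TopologicalSpace Y] : UnordConf n Y → Set Y :=
  Quotient.lift (fun a => Set.range a.1) (by
    rintro a b ⟨σ, h⟩
    show Set.range a.1 = Set.range b.1
    rw [← h, Set.range_comp]
    simp)

/-- An `n`-valued map from `X` to `Y` is a continuous map `X → D_n(Y)`. -/
abbrev NValuedMap (X Y : Type*) [TopologicalSpace X] [TopologicalSpace Y] (n : ℕ) :=
  C(X, UnordConf n Y)

/-- `g` is a submap of `f` when `g(x) ⊆ f(x)` for all `x`. -/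
def IsSubmap {X Y : Type*} [TopologicalSpace X] [TopologicalSpace Y] {k n : ℕ}
    (g : NValuedMap X Y k) (f : NValuedMap X Y n) : Prop :=
  ∀ x : X, (g x).values ⊆ (f x).values

/-- An `n`-valued map is irreducible when it admits no proper (`k`-valued, `0 < k < n`) submap. -/
def IsIrreducibleNV {X Y : Type*} [TopologicalSpace X] [TopologicalSpace Y] {n : ℕ}
    (f : NValuedMap X Y n) : Prop :=
  ¬ ∃ (k : ℕ) (g : NValuedMap X Y k), 0 < k ∧ k < n ∧ IsSubmap g f

/-- A partition of an `n`-valued map `f` into `l` multimaps: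
a family of `kᵢ`-valued maps with `k₁ + ⋯ + k_l = n` whose values unite to those of `f`. -/
structure NVPartition {X Y : Type*} [TopologicalSpace X] [TopologicalSpace Y] {n : ℕ}
    (f : NValuedMap X Y n) (l : ℕ) where
  card : Fin l → ℕ
  card_pos : ∀ i, 0 < card i
  maps : ∀ i, NValuedMap X Y (card i)
  sum_card : ∑ i, card i = n
  values_eq : ∀ x : X, (f x).values = ⋃ i, UnordConf.values ((maps i) x)

/-- A partition is into irreducibles when every member is irreducible. -/
def NVPartition.IsIrreduciblePartition {X Y : Type*} [TopologicalSpace X] [TopologicalSpace Y]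
    {n : ℕ} {f : NValuedMap X Y n} {l : ℕ} (P : NVPartition f l) : Prop :=
  ∀ i, IsIrreducibleNV (P.maps i)

/-- A space is a (compact) finite polyhedron when it is homeomorphic to the underlying
space of a finite simplicial complex in some Euclidean space. -/
def IsFinitePolyhedron (X : Type*) [TopologicalSpace X] : Prop :=
  ∃ (N : ℕ) (K : Geometry.SimplicialComplex ℝ (EuclideanSpace ℝ (Fin N))),
    K.faces.Finite ∧ Nonempty (X ≃ₜ K.space)
/-- The graph of an `n`-valued map, as a subspace of `X × Y`. -/
def NVGraph {X Y : Type*} [TopologicalSpace X] [TopologicalSpace Y] {n : ℕ}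
    (f : NValuedMap X Y n) : Type _ :=
  {p : X × Y // p.2 ∈ UnordConf.values (f p.1)}

instance {X Y : Type*} [TopologicalSpace X] [TopologicalSpace Y] {n : ℕ}
    (f : NValuedMap X Y n) : TopologicalSpace (NVGraph f) :=
  instTopologicalSpaceSubtype

/-- First-coordinate projection of the graph. -/
def NVGraph.q {X Y : Type*} [TopologicalSpace X] [TopologicalSpace Y] {n : ℕ}
    {f : NValuedMap X Y n} (z : NVGraph f) : X := z.1.1

/-- Second-coordinate projection of the graph. -/
def NVGraph.F {X Y : Type*} [TopologicalSpace X] [TopologicalSpace Y] {n : ℕ}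
    {f : NValuedMap X Y n} (z : NVGraph f) : Y := z.1.2

/-!
Near every point of `X` the values of `f` are separated by disjoint open sets and move
continuously, so `q : Γ_f → X` is a finite covering: over small path-connected opens, `Γ_f` is a
disjoint union of sheets, the graphs of continuous sections. Hence `Γ_f` is locally path connected,
and a clopen set `C ⊆ Γ_f` contains each such sheet entirely or not at all. Its slices
`F (q⁻¹ x ∩ C)` therefore have locally constant, hence constant, cardinality and form a
multivalued map; conversely the graph of a submap is clopen. So irreducible submaps correspond to
minimal nonempty clopen subsets of `Γ_f`, i.e. to its path components, and an irreducible
partition is the partition of `Γ_f` into path components.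
-/
open Topology

section

theorem ZerothHomotopy.mk_eq_mk_iff_mem_pathComponent {Z : Type*} [TopologicalSpace Z]
    {z w : Z} : ZerothHomotopy.mk z = ZerothHomotopy.mk w ↔ w ∈ pathComponent z :=
  Quotient.eq

namespace UnordConf

variable {n : ℕ} {Y : Type*} [TopologicalSpace Y]

def mk (a : OrdConf n Y) : UnordConf n Y := Quotient.mk _ a

theorem mk_surjective : Surjective (mk : OrdConf n Y → UnordConf n Y) :=
  Quotient.mk_surjective

theorem values_mk (a : OrdConf n Y) : (mk a).values = range a.1 := rfl

theorem continuous_mk : Continuous (mk : OrdConf n Y → UnordConf n Y) :=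
  continuous_quotient_mk'

theorem mk_eq_mk_of_range_eq {a b : OrdConf n Y} (h : range a.1 = range b.1) : mk a = mk b := by
  refine Quotient.sound ⟨(Equiv.ofInjective b.1 b.2).trans
    ((Equiv.setCongr h.symm).trans (Equiv.ofInjective a.1 a.2).symm), funext fun i => ?_⟩
  exact Equiv.apply_ofInjective_symm a.2 _

theorem values_finite (c : UnordConf n Y) : c.values.Finite := by
  obtain ⟨a, rfl⟩ := mk_surjective c
  exact finite_range _

theorem ncard_values (c : UnordConf n Y) : c.values.ncard = n := by
  obtain ⟨a, rfl⟩ := mk_surjective c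
  rw [values_mk, ncard_range_of_injective a.2, Nat.card_fin]

theorem isOpen_setOf_values {P : Set Y → Prop} (h : IsOpen {a : Fin n → Y | P (range a)}) :
    IsOpen {c : UnordConf n Y | P c.values} :=
  isQuotientMap_quotient_mk'.isOpen_preimage.mp (h.preimage continuous_subtype_val)

theorem isOpen_setOf_values_inter_nonempty {U : Set Y} (hU : IsOpen U) :
    IsOpen {c : UnordConf n Y | (c.values ∩ U).Nonempty} := by
  refine isOpen_setOf_values (P := fun s => (s ∩ U).Nonempty) ?_
  have : {a : Fin n → Y | (range a ∩ U).Nonempty} = ⋃ i, (fun a => a i) ⁻¹' U := by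
    ext a
    simp [Set.Nonempty]
  rw [this]
  exact isOpen_iUnion fun i => hU.preimage (continuous_apply i)

theorem isOpen_setOf_values_subset {U : Set Y} (hU : IsOpen U) :
    IsOpen {c : UnordConf n Y | c.values ⊆ U} := by
  refine isOpen_setOf_values (P := (· ⊆ U)) ?_
  simp_rw [range_subset_iff, ofPred_forall]
  exact isOpen_iInter_of_finite fun i => hU.preimage (continuous_apply i)

theorem values_eq_range {c : UnordConf n Y} {y : Fin n → Y} (hy : Injective y)
    (hmem : ∀ j, y j ∈ c.values) : c.values = range y :=
  (eq_of_subset_of_ncard_le (range_subset_iff.2 hmem)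
    (by rw [ncard_values, ncard_range_of_injective hy, Nat.card_fin]) c.values_finite).symm

/-- Pigeonhole: a configuration has only `n` points. -/
theorem values_inter_subsingleton {c : UnordConf n Y} {W : Fin n → Set Y}
    (hW : Pairwise (Disjoint on W)) (hc : ∀ j, (c.values ∩ W j).Nonempty) (j : Fin n) :
    (c.values ∩ W j).Subsingleton := by
  choose y hy using hc
  have hindex : ∀ {i j p}, p ∈ W i → p ∈ W j → i = j := fun hi hj =>
    hW.eq (not_disjoint_iff.2 ⟨_, hi, hj⟩)
  have hrange := values_eq_range
    (fun i i' h => hindex (hy i).2 (by rw [h]; exact (hy i').2)) fun j => (hy j).1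
  have key : ∀ p ∈ c.values ∩ W j, p = y j := by
    rintro p ⟨hp, hpW⟩
    rw [hrange] at hp
    obtain ⟨i, rfl⟩ := hp
    rw [hindex (hy i).2 hpW]
  exact fun p hp p' hp' => (key p hp).trans (key p' hp').symm

end UnordConf

variable {X Y : Type*} [TopologicalSpace X] [TopologicalSpace Y] {n k : ℕ}

theorem OrdConf.exists_range_eq {m : ℕ} {s : Set Y} (hs : s.Finite) (hm : s.ncard = m) :
    ∃ a : OrdConf m Y, range a.1 = s := by
  have : Finite s := hs.to_subtype
  let e := Finite.equivFinOfCardEq (α := s) hm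
  exact ⟨⟨Subtype.val ∘ e.symm, Subtype.val_injective.comp e.symm.injective⟩,
    by rw [range_comp, e.symm.range_eq_univ, image_univ, Subtype.range_coe]⟩

theorem exists_nValuedMap_of_locally_eq_range [ConnectedSpace X] {φ : X → Set Y}
    (hφ : ∀ x₀, ∃ V ∈ 𝓝 x₀, ∃ (m : ℕ) (s : V → OrdConf m Y),
      Continuous s ∧ ∀ v : V, range (s v).1 = φ v.1) :
    ∃ (m : ℕ) (g : NValuedMap X Y m), ∀ x, (g x).values = φ x := by
  have hncard : ∀ x₀, ∀ᶠ x in 𝓝 x₀, (φ x).ncard = (φ x₀).ncard := fun x₀ => by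
    obtain ⟨V, hV, m, s, -, hs⟩ := hφ x₀
    have hcard : ∀ v : V, (φ v).ncard = m := fun v => by
      rw [← hs, ncard_range_of_injective (s v).2, Nat.card_fin]
    filter_upwards [hV] with x hx
    rw [hcard ⟨x, hx⟩, hcard ⟨x₀, mem_of_mem_nhds hV⟩]
  have hfinite : ∀ x, (φ x).Finite := fun x => by
    obtain ⟨V, hV, m, s, -, hs⟩ := hφ x
    exact hs ⟨x, mem_of_mem_nhds hV⟩ ▸ finite_range _
  set m := (φ (Classical.arbitrary X)).ncard
  have hconst : ∀ x, (φ x).ncard = m := fun x =>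
    ((IsLocallyConstant.iff_eventually_eq _).2 hncard).apply_eq_of_preconnectedSpace _ _
  choose a ha using fun x => OrdConf.exists_range_eq (hfinite x) (hconst x)
  refine ⟨m, ⟨fun x => UnordConf.mk (a x), continuous_iff_continuousAt.2 fun x₀ => ?_⟩, ha⟩
  obtain ⟨V, hV, m', s, hs, hsφ⟩ := hφ x₀
  obtain rfl : m' = m := by
    rw [← hconst x₀, ← hsφ ⟨x₀, mem_of_mem_nhds hV⟩, ncard_range_of_injective (s _).2, Nat.card_fin]
  refine ContinuousOn.continuousAt ?_ hV
  rw [continuousOn_iff_continuous_domRestrict]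
  convert UnordConf.continuous_mk.comp hs using 1
  funext v
  exact UnordConf.mk_eq_mk_of_range_eq (by rw [ha, hsφ])

theorem NVPartition.isSubmap {f : NValuedMap X Y n} {l : ℕ} (P : NVPartition f l) (i : Fin l) :
    IsSubmap (P.maps i) f := fun x =>
  P.values_eq x ▸ subset_iUnion (fun i => (P.maps i x).values) i

/-- Otherwise the other members would cover the `n` values of `f` with fewer than `n` points. -/
theorem NVPartition.eq_of_values_eq {f : NValuedMap X Y n} {l : ℕ} (P : NVPartition f l)
    {i j : Fin l} {x : X} (h : (P.maps i x).values = (P.maps j x).values) : i = j := by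
  classical
  by_contra hij
  have hcover : (f x).values ⊆ ⋃ i' ∈ Finset.univ.erase j, (P.maps i' x).values := by
    intro y hy
    obtain ⟨i', hi'⟩ := mem_iUnion.1 (P.values_eq x ▸ hy)
    by_cases hi'j : i' = j
    · subst hi'j
      exact mem_iUnion₂.2 ⟨i, Finset.mem_erase.2 ⟨hij, Finset.mem_univ i⟩, h ▸ hi'⟩
    · exact mem_iUnion₂.2 ⟨i', Finset.mem_erase.2 ⟨hi'j, Finset.mem_univ i'⟩, hi'⟩
  have hle := (ncard_le_ncard hcover ((Finset.finite_toSet _).biUnion fun i' _ =>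
    (P.maps i' x).values_finite)).trans (Finset.set_ncard_biUnion_le _ _)
  simp only [UnordConf.ncard_values] at hle
  have hsum := Finset.sum_erase_add _ P.card (Finset.mem_univ j)
  have := P.card_pos j
  rw [P.sum_card] at hsum
  omega

/-- Over `base`, the graph of `f` splits into the graphs of the continuous sections `sec j`,
separated by the disjoint open sets `nbhd j`. -/
structure NValuedMap.LocalSections (f : NValuedMap X Y n) where
  base : Set X
  nbhd : Fin n → Set Y
  sec : Fin n → X → Y
  isOpen_base : IsOpen base
  isOpen_nbhd : ∀ j, IsOpen (nbhd j)
  pairwise_disjoint_nbhd : Pairwise (Disjoint on nbhd)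
  continuousOn_sec : ∀ j, ContinuousOn (sec j) base
  values_inter_nbhd : ∀ x ∈ base, ∀ j, (f x).values ∩ nbhd j = {sec j x}

theorem NValuedMap.exists_localSections [T2Space Y] (f : NValuedMap X Y n) (x₀ : X) :
    ∃ L : f.LocalSections, x₀ ∈ L.base := by
  obtain ⟨a, ha⟩ := UnordConf.mk_surjective (f x₀)
  have hsep : Pairwise (Disjoint on fun j => 𝓝 (a.1 j)) :=
    pairwise_disjoint_nhds.comp_of_injective a.2
  obtain ⟨W, hW, hWd⟩ := hsep.exists_mem_filter_basis_of_disjoint fun j => nhds_basis_opens (a.1 j)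
  set base := {x | ∀ j, ((f x).values ∩ W j).Nonempty}
  have hbase : IsOpen base := by
    simp_rw [base, ofPred_forall]
    exact isOpen_iInter_of_finite fun j =>
      (UnordConf.isOpen_setOf_values_inter_nonempty (hW j).2).preimage f.continuous
  have hsec : ∀ j x, ∃ y, x ∈ base → (f x).values ∩ W j = {y} := by
    intro j x
    by_cases hx : x ∈ base
    · obtain ⟨y, hy⟩ := exists_eq_singleton_iff_nonempty_subsingleton.2
        ⟨hx j, UnordConf.values_inter_subsingleton hWd hx j⟩
      exact ⟨y, fun _ => hy⟩
    · exact ⟨a.1 j, fun h => absurd h hx⟩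
  choose sec hsec using hsec
  have hcont : ∀ j, ContinuousOn (sec j) base := by
    intro j
    rw [continuousOn_iff]
    intro x₁ hx₁ t ht hxt
    -- near `x₁`, `f x` still meets `W j ∩ t`, and its only point in `W j` is `sec j x`
    refine ⟨{x | ((f x).values ∩ (W j ∩ t)).Nonempty},
      (UnordConf.isOpen_setOf_values_inter_nonempty ((hW j).2.inter ht)).preimage f.continuous,
      ?_, ?_⟩
    · have : sec j x₁ ∈ (f x₁).values ∩ W j := hsec j x₁ hx₁ ▸ rfl
      exact ⟨sec j x₁, this.1, this.2, hxt⟩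
    · rintro x ⟨⟨y, hy, hyW, hyt⟩, hx⟩
      have : y ∈ ({sec j x} : Set Y) := hsec j x hx ▸ ⟨hy, hyW⟩
      rwa [mem_singleton_iff.1 this] at hyt
  refine ⟨⟨base, W, sec, hbase, fun j => (hW j).2, hWd, hcont, fun x hx j => hsec j x hx⟩, ?_⟩
  intro j
  rw [← ha, UnordConf.values_mk]
  exact ⟨a.1 j, mem_range_self j, (hW j).1⟩

namespace NVGraph

variable {f : NValuedMap X Y n}

theorem continuous_q : Continuous (q : NVGraph f → X) :=
  continuous_fst.comp continuous_subtype_val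

theorem continuous_F : Continuous (F : NVGraph f → Y) :=
  continuous_snd.comp continuous_subtype_val

theorem F_mem_values (z : NVGraph f) : z.F ∈ (f z.q).values := z.2

def slice (C : Set (NVGraph f)) (x : X) : Set Y := F '' {z | q z = x ∧ z ∈ C}

theorem mem_slice_iff {C : Set (NVGraph f)} {x : X} {y : Y} :
    y ∈ slice C x ↔ ∃ h : y ∈ (f x).values, (⟨(x, y), h⟩ : NVGraph f) ∈ C := by
  constructor
  · rintro ⟨z, ⟨rfl, hz⟩, rfl⟩
    exact ⟨z.2, hz⟩
  · rintro ⟨h, hC⟩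
    exact ⟨_, ⟨rfl, hC⟩, rfl⟩

theorem F_mem_slice_iff {C : Set (NVGraph f)} {z : NVGraph f} : z.F ∈ slice C z.q ↔ z ∈ C :=
  mem_slice_iff.trans ⟨fun ⟨_, hz⟩ => hz, fun hz => ⟨z.2, hz⟩⟩

theorem slice_subset_values (C : Set (NVGraph f)) (x : X) : slice C x ⊆ (f x).values :=
  fun _ hy => (mem_slice_iff.1 hy).1

theorem slice_finite (C : Set (NVGraph f)) (x : X) : (slice C x).Finite :=
  (f x).values_finite.subset (slice_subset_values C x)

theorem slice_mono {C D : Set (NVGraph f)} (h : C ⊆ D) (x : X) : slice C x ⊆ slice D x :=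
  image_mono fun _ hz => ⟨hz.1, h hz.2⟩

theorem slice_univ (x : X) : slice (univ : Set (NVGraph f)) x = (f x).values := by
  ext y
  exact mem_slice_iff.trans ⟨fun ⟨h, _⟩ => h, fun h => ⟨h, trivial⟩⟩

theorem slice_iUnion {ι : Type*} (C : ι → Set (NVGraph f)) (x : X) :
    slice (⋃ i, C i) x = ⋃ i, slice (C i) x := by
  ext y
  rw [mem_iUnion]
  simp only [mem_slice_iff]
  constructor
  · rintro ⟨h, hi⟩
    obtain ⟨i, hi⟩ := mem_iUnion.1 hi
    exact ⟨i, h, hi⟩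
  · rintro ⟨i, h, hi⟩
    exact ⟨h, mem_iUnion.2 ⟨i, hi⟩⟩

theorem slice_diff (C D : Set (NVGraph f)) (x : X) :
    slice (C \ D) x = slice C x \ slice D x := by
  ext y
  simp only [mem_slice_iff, mem_sdiff]
  exact ⟨fun ⟨h, hC, hD⟩ => ⟨⟨h, hC⟩, fun ⟨_, hD'⟩ => hD hD'⟩,
    fun ⟨⟨h, hC⟩, hD⟩ => ⟨h, hC, fun hD' => hD ⟨h, hD'⟩⟩⟩

theorem disjoint_slice {C D : Set (NVGraph f)} (h : Disjoint C D) (x : X) :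
    Disjoint (slice C x) (slice D x) := by
  rw [← sdiff_eq_left, ← slice_diff, h.sdiff_eq_left]

theorem sum_ncard_slice {ι : Type*} [Fintype ι] {C : ι → Set (NVGraph f)}
    (hdisj : Pairwise (Disjoint on C)) (hcover : ⋃ i, C i = univ) (x : X) :
    ∑ i, (slice (C i) x).ncard = n := by
  rw [← finsum_eq_sum_of_fintype, ← ncard_iUnion_of_finite (fun i => slice_finite _ _)
    fun i j hij => disjoint_slice (hdisj hij) x, ← slice_iUnion, hcover, slice_univ,
    UnordConf.ncard_values]

variable (f) in
def subgraph (g : NValuedMap X Y k) : Set (NVGraph f) := {z | z.F ∈ (g z.q).values}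

theorem slice_subgraph {g : NValuedMap X Y k} (hg : IsSubmap g f) (x : X) :
    slice (subgraph f g) x = (g x).values := by
  ext y
  exact ⟨fun hy => (mem_slice_iff.1 hy).2, fun hy => mem_slice_iff.2 ⟨hg x hy, hy⟩⟩

end NVGraph

open NVGraph

namespace NValuedMap.LocalSections

variable {f : NValuedMap X Y n} (L : f.LocalSections) {x : X}

theorem sec_mem_inter (hx : x ∈ L.base) (j : Fin n) : L.sec j x ∈ (f x).values ∩ L.nbhd j :=
  L.values_inter_nbhd x hx j ▸ rfl

theorem eq_sec_of_mem (hx : x ∈ L.base) {j : Fin n} {y : Y} (hy : y ∈ (f x).values)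
    (hyj : y ∈ L.nbhd j) : y = L.sec j x := by
  have : y ∈ ({L.sec j x} : Set Y) := L.values_inter_nbhd x hx j ▸ ⟨hy, hyj⟩
  exact this

theorem injective_sec (hx : x ∈ L.base) : Injective fun j => L.sec j x := by
  intro i j h
  refine L.pairwise_disjoint_nbhd.eq (not_disjoint_iff.2 ⟨_, (L.sec_mem_inter hx i).2, ?_⟩)
  rw [show L.sec i x = L.sec j x from h]
  exact (L.sec_mem_inter hx j).2

theorem values_eq_range (hx : x ∈ L.base) : (f x).values = range fun j => L.sec j x :=
  UnordConf.values_eq_range (L.injective_sec hx) fun j => (L.sec_mem_inter hx j).1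

theorem exists_eq_sec (hx : x ∈ L.base) {y : Y} (hy : y ∈ (f x).values) : ∃ j, y = L.sec j x := by
  rw [L.values_eq_range hx] at hy
  obtain ⟨j, rfl⟩ := hy
  exact ⟨j, rfl⟩

def sheet (V : Set X) (j : Fin n) : Set (NVGraph f) := {z | z.q ∈ V ∧ z.F ∈ L.nbhd j}

theorem isOpen_sheet {V : Set X} (hV : IsOpen V) (j : Fin n) : IsOpen (L.sheet V j) :=
  (hV.preimage continuous_q).inter ((L.isOpen_nbhd j).preimage continuous_F)

theorem isPathConnected_sheet {V : Set X} (hV : IsPathConnected V) (hVb : V ⊆ L.base)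
    (j : Fin n) : IsPathConnected (L.sheet V j) := by
  have : PathConnectedSpace V := isPathConnected_iff_pathConnectedSpace.mp hV
  let σ : V → NVGraph f := fun v => ⟨(v, L.sec j v), (L.sec_mem_inter (hVb v.2) j).1⟩
  have hσ : Continuous σ :=
    (continuous_subtype_val.prodMk ((L.continuousOn_sec j).mono hVb).domRestrict).subtype_mk _
  have : range σ = L.sheet V j := by
    ext z
    refine ⟨?_, fun ⟨hzV, hzj⟩ => ⟨⟨z.q, hzV⟩, Subtype.ext (Prod.ext rfl ?_)⟩⟩
    · rintro ⟨v, rfl⟩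
      exact ⟨v.2, (L.sec_mem_inter (hVb v.2) j).2⟩
    · exact (L.eq_sec_of_mem (hVb hzV) z.2 hzj).symm
  exact this ▸ isPathConnected_range hσ

/-- A clopen set contains all or none of a sheet over a path-connected base. -/
theorem sec_mem_slice_iff {C : Set (NVGraph f)} (hC : IsClopen C)
    {V : Set X} (hV : IsPathConnected V) (hVb : V ⊆ L.base) {x x' : X} (hx : x ∈ V)
    (hx' : x' ∈ V) (j : Fin n) : L.sec j x ∈ slice C x ↔ L.sec j x' ∈ slice C x' := by
  have hmem : ∀ x ∈ V, ∀ h : L.sec j x ∈ (f x).values,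
      (⟨(x, L.sec j x), h⟩ : NVGraph f) ∈ L.sheet V j :=
    fun x hx _ => ⟨hx, (L.sec_mem_inter (hVb hx) j).2⟩
  have hsheet := (L.isPathConnected_sheet hV hVb j).isConnected.isPreconnected
  simp only [mem_slice_iff]
  constructor
  · rintro ⟨h, hC'⟩
    exact ⟨(L.sec_mem_inter (hVb hx') j).1,
      hsheet.subset_isClopen hC ⟨_, hmem x hx h, hC'⟩ (hmem x' hx' _)⟩
  · rintro ⟨h, hC'⟩
    exact ⟨(L.sec_mem_inter (hVb hx) j).1,
      hsheet.subset_isClopen hC ⟨_, hmem x' hx' h, hC'⟩ (hmem x hx _)⟩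

theorem slice_eq_image {C : Set (NVGraph f)} (hC : IsClopen C)
    {V : Set X} (hV : IsPathConnected V) (hVb : V ⊆ L.base) {x₀ x : X} (hx₀ : x₀ ∈ V)
    (hx : x ∈ V) : slice C x = (fun j => L.sec j x) '' {j | L.sec j x₀ ∈ slice C x₀} := by
  ext y
  constructor
  · intro hy
    obtain ⟨j, rfl⟩ := L.exists_eq_sec (hVb hx) (slice_subset_values C x hy)
    exact ⟨j, (L.sec_mem_slice_iff hC hV hVb hx₀ hx j).2 hy, rfl⟩
  · rintro ⟨j, hj, rfl⟩
    exact (L.sec_mem_slice_iff hC hV hVb hx₀ hx j).1 hj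

end NValuedMap.LocalSections

instance NVGraph.locallyPathConnectedSpace [T2Space Y] [LocallyPathConnectedSpace X]
    (f : NValuedMap X Y n) : LocallyPathConnectedSpace (NVGraph f) := by
  rw [locallyPathConnectedSpace_iff_pathComponentIn_mem_nhds]
  intro z u hu hzu
  obtain ⟨U, hU, rfl⟩ := isOpen_induced_iff.mp hu
  obtain ⟨A, B, hA, hB, hzA, hzB, hABU⟩ := isOpen_prod_iff.mp hU z.q z.F hzu
  obtain ⟨L, hzL⟩ := f.exists_localSections z.q
  obtain ⟨j, hj⟩ := L.exists_eq_sec hzL z.F_mem_values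
  have hzV : z.q ∈ L.base ∩ A ∩ L.sec j ⁻¹' B := ⟨⟨hzL, hzA⟩, show L.sec j z.q ∈ B from hj ▸ hzB⟩
  set V := pathComponentIn (L.base ∩ A ∩ L.sec j ⁻¹' B) z.q
  have hVsub : V ⊆ L.base ∩ A ∩ L.sec j ⁻¹' B := pathComponentIn_subset
  have hVopen : IsOpen V := by
    refine IsOpen.pathComponentIn ?_ _
    rw [inter_right_comm]
    exact (L.continuousOn_sec j).isOpen_inter_preimage L.isOpen_base hB |>.inter hA
  have hz : z ∈ L.sheet V j := ⟨mem_pathComponentIn_self hzV, hj ▸ (L.sec_mem_inter hzL j).2⟩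
  have hsheet : L.sheet V j ⊆ Subtype.val ⁻¹' U := by
    rintro w ⟨hwV, hwj⟩
    have hw := hVsub hwV
    exact hABU ⟨hw.1.2, L.eq_sec_of_mem hw.1.1 w.2 hwj ▸ hw.2⟩
  exact Filter.mem_of_superset ((L.isOpen_sheet hVopen j).mem_nhds hz)
    ((L.isPathConnected_sheet (isPathConnected_pathComponentIn hzV)
      (hVsub.trans fun _ h => h.1.1) j).subset_pathComponentIn hz hsheet)

namespace NVGraph

variable {f : NValuedMap X Y n} [T2Space Y]

theorem isClopen_subgraph {g : NValuedMap X Y k} (hg : IsSubmap g f) :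
    IsClopen (subgraph f g) := by
  have hlocal : ∀ z : NVGraph f, ∃ (L : f.LocalSections) (j : Fin n),
      z.q ∈ L.base ∧ z.F = L.sec j z.q := fun z => by
    obtain ⟨L, hL⟩ := f.exists_localSections z.q
    obtain ⟨j, hj⟩ := L.exists_eq_sec hL z.F_mem_values
    exact ⟨L, j, hL, hj⟩
  refine ⟨isOpen_compl_iff.mp (isOpen_iff_mem_nhds.mpr fun z hz => ?_),
    isOpen_iff_mem_nhds.mpr fun z hz => ?_⟩
  · -- near `z`, the values of `g` stay in the sets `nbhd i` with `i ≠ j`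
    obtain ⟨L, j, hzL, hj⟩ := hlocal z
    set O := ⋃ i ∈ ({j}ᶜ : Set (Fin n)), L.nbhd i
    have hO : Disjoint O (L.nbhd j) :=
      disjoint_iUnion₂_left.2 fun i hi => L.pairwise_disjoint_nbhd hi
    have hgz : (g z.q).values ⊆ O := fun y hy => by
      obtain ⟨i, rfl⟩ := L.exists_eq_sec hzL (hg _ hy)
      refine mem_biUnion (fun hij : i = j => hz ?_) (L.sec_mem_inter hzL i).2
      show z.F ∈ (g z.q).values
      rwa [hj, ← hij]
    have hV : IsOpen (L.base ∩ g ⁻¹' {c | c.values ⊆ O}) :=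
      L.isOpen_base.inter ((UnordConf.isOpen_setOf_values_subset
        (isOpen_biUnion fun i _ => L.isOpen_nbhd i)).preimage g.continuous)
    refine Filter.mem_of_superset ((L.isOpen_sheet hV j).mem_nhds
      ⟨⟨hzL, hgz⟩, hj ▸ (L.sec_mem_inter hzL j).2⟩) ?_
    rintro w ⟨⟨-, hwO⟩, hwj⟩ hw
    exact disjoint_left.mp hO (hwO hw) hwj
  · -- near `z`, the value of `g` in `nbhd j` is the unique value of `f` there
    obtain ⟨L, j, hzL, hj⟩ := hlocal z
    have hV : IsOpen (L.base ∩ g ⁻¹' {c | (c.values ∩ L.nbhd j).Nonempty}) :=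
      L.isOpen_base.inter ((UnordConf.isOpen_setOf_values_inter_nonempty
        (L.isOpen_nbhd j)).preimage g.continuous)
    refine Filter.mem_of_superset ((L.isOpen_sheet hV j).mem_nhds
      ⟨⟨hzL, z.F, hz, hj ▸ (L.sec_mem_inter hzL j).2⟩, hj ▸ (L.sec_mem_inter hzL j).2⟩) ?_
    rintro w ⟨⟨hwL, y, hy, hyj⟩, hwj⟩
    have : w.F = y :=
      (L.eq_sec_of_mem hwL w.F_mem_values hwj).trans (L.eq_sec_of_mem hwL (hg _ hy) hyj).symm
    show w.F ∈ (g w.q).values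
    rwa [this]

theorem isIrreducibleNV_of_values_eq_slice [Nonempty X] {g : NValuedMap X Y k}
    {C : Set (NVGraph f)} (hC : IsPreconnected C) (hg : ∀ x, (g x).values = slice C x) :
    IsIrreducibleNV g := by
  rintro ⟨m, h, hm, hmk, hhg⟩
  have hhf : IsSubmap h f := fun x => (hhg x).trans (hg x ▸ slice_subset_values C x)
  have hsub : subgraph f h ⊆ C := fun w hw => F_mem_slice_iff.1 (hg w.q ▸ hhg w.q hw)
  set x₀ := Classical.arbitrary X
  obtain ⟨y, hy⟩ := nonempty_of_ncard_ne_zero (s := (h x₀).values)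
    (by rw [UnordConf.ncard_values]; omega)
  have hw : (⟨(x₀, y), hhf x₀ hy⟩ : NVGraph f) ∈ subgraph f h := hy
  have hCh : C ⊆ subgraph f h := hC.subset_isClopen (isClopen_subgraph hhf) ⟨_, hsub hw, hw⟩
  have hvalues : (h x₀).values = (g x₀).values := by
    rw [← slice_subgraph hhf, hg, hsub.antisymm hCh]
  have := congrArg ncard hvalues
  rw [UnordConf.ncard_values, UnordConf.ncard_values] at this
  omega

variable [LocallyPathConnectedSpace X] [ConnectedSpace X]
  {C : Set (NVGraph f)}

theorem exists_nValuedMap_slice (hC : IsClopen C) :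
    ∃ (m : ℕ) (g : NValuedMap X Y m), ∀ x, (g x).values = slice C x := by
  refine exists_nValuedMap_of_locally_eq_range fun x₀ => ?_
  obtain ⟨L, hL⟩ := f.exists_localSections x₀
  set V := pathComponentIn L.base x₀
  have hV : IsPathConnected V := isPathConnected_pathComponentIn hL
  have hVb : V ⊆ L.base := pathComponentIn_subset
  have hx₀ : x₀ ∈ V := mem_pathComponentIn_self hL
  classical
  set J := Finset.univ.filter fun j => L.sec j x₀ ∈ slice C x₀
  let ι := J.orderEmbOfFin rfl
  refine ⟨V, (L.isOpen_base.pathComponentIn x₀).mem_nhds hx₀, J.card,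
    fun v => ⟨fun i => L.sec (ι i) v, (L.injective_sec (hVb v.2)).comp ι.injective⟩,
    continuous_pi (fun i => ((L.continuousOn_sec (ι i)).mono hVb).domRestrict) |>.subtype_mk _,
    fun v => ?_⟩
  change range ((fun j => L.sec j v) ∘ ι) = _
  rw [L.slice_eq_image hC hV hVb hx₀ v.2, range_comp, Finset.range_orderEmbOfFin]
  simp [J]

theorem slice_nonempty (hC : IsClopen C) (hne : C.Nonempty) (x : X) :
    (slice C x).Nonempty := by
  obtain ⟨m, g, hg⟩ := exists_nValuedMap_slice hC
  obtain ⟨z, hz⟩ := hne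
  have hm : 0 < m := by
    rw [← (g z.q).ncard_values, hg]
    exact (ncard_pos (slice_finite C _)).2 ⟨z.F, F_mem_slice_iff.2 hz⟩
  rw [← hg x]
  exact nonempty_of_ncard_ne_zero (by rw [UnordConf.ncard_values]; omega)

instance : Finite (ZerothHomotopy (NVGraph f)) := by
  set x₀ := Classical.arbitrary X
  have : Finite (f x₀).values := (f x₀).values_finite.to_subtype
  refine Finite.of_surjective
    (fun y : (f x₀).values => ZerothHomotopy.mk (⟨(x₀, y.1), y.2⟩ : NVGraph f)) fun t => ?_
  obtain ⟨z, rfl⟩ := ZerothHomotopy.mk_surjective t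
  obtain ⟨y, hy⟩ := slice_nonempty (IsClopen.pathComponent z) ⟨z, mem_pathComponent_self z⟩ x₀
  obtain ⟨h, hzy⟩ := mem_slice_iff.1 hy
  exact ⟨⟨y, h⟩, (ZerothHomotopy.mk_eq_mk_iff_mem_pathComponent.2 hzy).symm⟩

theorem subgraph_eq_pathComponent {g : NValuedMap X Y k} (hg : IsSubmap g f)
    (hirr : IsIrreducibleNV g) {z : NVGraph f} (hz : z ∈ subgraph f g) :
    subgraph f g = pathComponent z := by
  have hPS : pathComponent z ⊆ subgraph f g :=
    isPathConnected_pathComponent.isConnected.isPreconnected.subset_isClopen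
      (isClopen_subgraph hg) ⟨z, mem_pathComponent_self z, hz⟩
  refine (hPS.antisymm ?_).symm
  by_contra hSP
  obtain ⟨w, hwS, hwP⟩ := not_subset.1 hSP
  have hlt : slice (pathComponent z) z.q ⊂ slice (subgraph f g) z.q := by
    refine (ssubset_iff_of_subset (slice_mono hPS _)).2 ?_
    obtain ⟨y, hy⟩ := slice_nonempty ((isClopen_subgraph hg).diff (IsClopen.pathComponent z))
      ⟨w, hwS, hwP⟩ z.q
    rw [slice_diff] at hy
    exact ⟨y, hy⟩
  obtain ⟨m, h, hh⟩ := exists_nValuedMap_slice (IsClopen.pathComponent z)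
  refine hirr ⟨m, h, ?_, ?_, fun x => ?_⟩
  · rw [← (h z.q).ncard_values, hh]
    exact (ncard_pos (slice_finite _ _)).2 ⟨z.F, F_mem_slice_iff.2 (mem_pathComponent_self z)⟩
  · rw [← (h z.q).ncard_values, ← (g z.q).ncard_values, hh, ← slice_subgraph hg]
    exact ncard_lt_ncard hlt (slice_finite _ _)
  · rw [hh, ← slice_subgraph hg]
    exact slice_mono hPS x

variable (f) in
theorem exists_isIrreduciblePartition_pathComponents :
    ∃ (P : NVPartition f (Nat.card (ZerothHomotopy (NVGraph f))))
      (comp : Fin (Nat.card (ZerothHomotopy (NVGraph f))) → Set (NVGraph f)),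
      P.IsIrreduciblePartition ∧ (∀ i, ∃ z, comp i = pathComponent z) ∧
      (∀ z, ∃! i, z ∈ comp i) ∧ ∀ i x, (P.maps i x).values = slice (comp i) x := by
  let ε := (Finite.equivFin (ZerothHomotopy (NVGraph f))).symm
  set comp := fun i => pathComponent (ε i).out
  have hmem : ∀ z i, z ∈ comp i ↔ ε.symm (ZerothHomotopy.mk z) = i := fun z i => by
    rw [← ZerothHomotopy.mk_eq_mk_iff_mem_pathComponent,
      show ZerothHomotopy.mk (ε i).out = ε i from Quotient.out_eq _, eq_comm, ε.symm_apply_eq]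
  have hdisj : Pairwise (Disjoint on comp) := fun i j hij =>
    disjoint_left.2 fun z hi hj => hij (((hmem z i).1 hi).symm.trans ((hmem z j).1 hj))
  have hcover : ⋃ i, comp i = univ := iUnion_eq_univ_iff.2 fun z => ⟨_, (hmem z _).2 rfl⟩
  choose m g hg using fun i => exists_nValuedMap_slice (IsClopen.pathComponent (ε i).out)
  have hpos : ∀ i, 0 < m i := fun i => by
    rw [← (g i (Classical.arbitrary X)).ncard_values, hg]
    exact (ncard_pos (slice_finite _ _)).2
      (slice_nonempty (IsClopen.pathComponent _) ⟨_, mem_pathComponent_self _⟩ _)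
  have hsum : ∑ i, m i = n :=
    (Finset.sum_congr rfl fun i _ => by rw [← hg, UnordConf.ncard_values]).trans
      (sum_ncard_slice hdisj hcover (Classical.arbitrary X))
  have hvalues : ∀ x, (f x).values = ⋃ i, (g i x).values := fun x => by
    rw [← slice_univ, ← hcover, slice_iUnion]
    exact iUnion_congr fun i => (hg i x).symm
  refine ⟨⟨m, hpos, g, hsum, hvalues⟩, comp, fun i => isIrreducibleNV_of_values_eq_slice
      isPathConnected_pathComponent.isConnected.isPreconnected (hg i),
    fun i => ⟨_, rfl⟩, fun z => ⟨_, (hmem z _).2 rfl, fun i hi => ((hmem z i).1 hi).symm⟩, hg⟩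

end NVGraph

theorem NVPartition.card_zerothHomotopy [T2Space Y] [LocallyPathConnectedSpace X] [ConnectedSpace X]
    {f : NValuedMap X Y n} {l : ℕ} (P : NVPartition f l) (hP : P.IsIrreduciblePartition) :
    Nat.card (ZerothHomotopy (NVGraph f)) = l := by
  set x₀ := Classical.arbitrary X
  have hne : ∀ i, ∃ z, z ∈ subgraph f (P.maps i) := fun i => by
    obtain ⟨y, hy⟩ := nonempty_of_ncard_ne_zero (s := (P.maps i x₀).values)
      (by rw [UnordConf.ncard_values]; exact (P.card_pos i).ne')
    exact ⟨⟨(x₀, y), P.isSubmap i x₀ hy⟩, hy⟩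
  choose z hz using hne
  have hcomp : ∀ i, subgraph f (P.maps i) = pathComponent (z i) := fun i =>
    subgraph_eq_pathComponent (P.isSubmap i) (hP i) (hz i)
  refine ((Nat.card_eq_of_bijective (fun i => ZerothHomotopy.mk (z i))
    ⟨fun i j hij => P.eq_of_values_eq (x := x₀) ?_, fun t => ?_⟩).symm.trans (Nat.card_fin l))
  · rw [← slice_subgraph (P.isSubmap i), ← slice_subgraph (P.isSubmap j), hcomp, hcomp,
      pathComponent_congr (ZerothHomotopy.mk_eq_mk_iff_mem_pathComponent.1 hij)]
  · obtain ⟨w, rfl⟩ := ZerothHomotopy.mk_surjective t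
    obtain ⟨i, hi⟩ := mem_iUnion.1 (P.values_eq w.q ▸ w.F_mem_values)
    exact ⟨i, ZerothHomotopy.mk_eq_mk_iff_mem_pathComponent.2 (hcomp i ▸ hi)⟩

/-- Near `x`, only the sets containing `x` reach a small ball around `x`, and their union with
that ball is star-shaped about `x`. -/
theorem locallyPathConnectedSpace_biUnion_of_convex {E ι : Type*} [NormedAddCommGroup E]
    [NormedSpace ℝ E] {t : Set ι} (ht : t.Finite) {S : ι → Set E}
    (hconv : ∀ i ∈ t, Convex ℝ (S i)) (hclosed : ∀ i ∈ t, IsClosed (S i)) :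
    LocallyPathConnectedSpace (⋃ i ∈ t, S i) := by
  rw [locallyPathConnectedSpace_iff_pathComponentIn_mem_nhds]
  rintro ⟨x, hx⟩ u hu hxu
  obtain ⟨U, hU, rfl⟩ := isOpen_induced_iff.mp hu
  obtain ⟨ε, hε, hball⟩ := Metric.isOpen_iff.mp hU x hxu
  set star := ⋃ i ∈ {i ∈ t | x ∈ S i}, S i ∩ Metric.ball x ε
  have hstar : StarConvex ℝ x star := starConvex_iUnion₂ fun i hi =>
    ((hconv i hi.1).inter (convex_ball x ε)).starConvex ⟨hi.2, Metric.mem_ball_self hε⟩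
  obtain ⟨i₀, hi₀, hxi₀⟩ := mem_iUnion₂.1 hx
  have hxstar : x ∈ star := mem_iUnion₂.2 ⟨i₀, ⟨hi₀, hxi₀⟩, hxi₀, Metric.mem_ball_self hε⟩
  set far := ⋃ i ∈ {i ∈ t | x ∉ S i}, S i
  have hfar : IsClosed far :=
    (ht.subset fun i hi => hi.1).isClosed_biUnion fun i hi => hclosed i hi.1
  have hxfar : x ∉ far := fun h => by
    obtain ⟨i, hi, hxi⟩ := mem_iUnion₂.1 h
    exact hi.2 hxi
  set P : Set (⋃ i ∈ t, S i) := Subtype.val ⁻¹' star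
  have hP : IsPathConnected P := by
    rw [Topology.IsInducing.subtypeVal.isPathConnected_iff, Subtype.image_preimage_coe,
      inter_eq_right.2 fun y hy => ?_]
    · exact hstar.isPathConnected hxstar
    · obtain ⟨i, hi, hyi, -⟩ := mem_iUnion₂.1 hy
      exact mem_iUnion₂.2 ⟨i, hi.1, hyi⟩
  have hPnhds : P ∈ 𝓝 ⟨x, hx⟩ := by
    refine Filter.mem_of_superset (((Metric.isOpen_ball.sdiff hfar).preimage
      continuous_subtype_val).mem_nhds ⟨Metric.mem_ball_self hε, hxfar⟩) ?_
    rintro ⟨y, hy⟩ ⟨hyB, hyfar⟩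
    obtain ⟨i, hi, hyi⟩ := mem_iUnion₂.1 hy
    exact mem_iUnion₂.2
      ⟨i, ⟨hi, by_contra fun hxi => hyfar (mem_iUnion₂.2 ⟨i, ⟨hi, hxi⟩, hyi⟩)⟩, hyi, hyB⟩
  refine Filter.mem_of_superset hPnhds
    (hP.subset_pathComponentIn (mem_of_mem_nhds hPnhds) fun y hy => hball ?_)
  obtain ⟨i, -, -, hyB⟩ := mem_iUnion₂.1 hy
  exact hyB

theorem IsFinitePolyhedron.t2Space (hX : IsFinitePolyhedron X) : T2Space X := by
  obtain ⟨N, K, -, ⟨e⟩⟩ := hX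
  exact e.isEmbedding.t2Space

theorem IsFinitePolyhedron.locallyPathConnectedSpace (hX : IsFinitePolyhedron X) :
    LocallyPathConnectedSpace X := by
  obtain ⟨N, K, hK, ⟨e⟩⟩ := hX
  have : LocallyPathConnectedSpace K.space :=
    locallyPathConnectedSpace_biUnion_of_convex hK (fun s _ => convex_convexHull ℝ _)
      fun s _ => s.finite_toSet.isClosed_convexHull ℝ
  exact e.isOpenEmbedding.locallyPathConnectedSpace

end

theorem statement_16 {X : Type*} [TopologicalSpace X] [ConnectedSpace X]
    (hX : IsFinitePolyhedron X) {n : ℕ} (f : NValuedMap X X n) (k : ℕ) :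
    ((∃ P : NVPartition f k, P.IsIrreduciblePartition) ↔
      Nat.card (ZerothHomotopy (NVGraph f)) = k) ∧
    ((∃ P : NVPartition f k, P.IsIrreduciblePartition) →
      ∃ (P : NVPartition f k) (comp : Fin k → Set (NVGraph f)),
        P.IsIrreduciblePartition ∧
        (∀ i, ∃ z : NVGraph f, comp i = pathComponent z) ∧
        (∀ z : NVGraph f, ∃! i, z ∈ comp i) ∧
        ∀ (i : Fin k) (x : X),
          UnordConf.values (P.maps i x) =
            NVGraph.F '' {z : NVGraph f | NVGraph.q z = x ∧ z ∈ comp i}) := by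
  have := hX.t2Space
  have := hX.locallyPathConnectedSpace
  obtain ⟨P₀, comp, hirr, hcomp, huniq, hslice⟩ :=
    NVGraph.exists_isIrreduciblePartition_pathComponents f
  have hcard : (∃ P : NVPartition f k, P.IsIrreduciblePartition) ↔
      Nat.card (ZerothHomotopy (NVGraph f)) = k :=
    ⟨fun ⟨P, hP⟩ => P.card_zerothHomotopy hP, fun h => h ▸ ⟨P₀, hirr⟩⟩
  refine ⟨hcard, fun h => ?_⟩
  obtain rfl := hcard.1 h
  exact ⟨P₀, comp, hirr, hcomp, huniq, hslice⟩
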